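/- Set g₀ := −f and assume (*): for each i = 1,…,n there exists j_i with 0 ≤ j_i ≤ m such that (g_{j_i})_{d,i} < 0 and (g_j)_{d,i} = 0 for all j > j_i. Let A = (a_{jk})_{j,k=0,…,m} be any real matrix with a_{jj} = 1 for all j, a_{jk} = 0 for k > j, and a_{jk} ≤ 0 for k < j, such that for each i = 1,…,n exactly one of (h₀)_{d,i},…,(h_m)_{d,i} is strictly negative, where h_k := ∑_{j=0}^m a_{jk} g_j. If, in addition, Δ(−g_j) = ∅ for j = 1,…,m and h_k(0) = g_k(0) + ∑_{j>k} a_{jk} g_j(0) ≥ 0 for all k = 1,…,m, then f^A_{gp,g} = s(f,g) (as elements of ℝ ∪ {±∞}). -/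

import Mathlib

open MvPolynomial Finset

noncomputable section

/-- `Finset.filter` with classical decidability. -/
def pfilter {β : Type*} (s : Finset β) (q : β → Prop) : Finset β :=
  @Finset.filter β q (fun _ => Classical.propDecidable _) s

/-- `|α| := α₁ + ⋯ + αₙ` for a multi-index `α`. -/
def adeg {n : ℕ} (α : Fin n →₀ ℕ) : ℕ := ∑ i, α i

/-- `Ω(p) := {α : |α| ≤ d, p_α ≠ 0, α ∉ {0, ε₁, …, εₙ}}`. -/
def OmegaSet {n : ℕ} (d : ℕ) (p : MvPolynomial (Fin n) ℝ) : Finset (Fin n →₀ ℕ) :=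
  pfilter p.support (fun α => adeg α ≤ d ∧ α ≠ 0 ∧ ∀ i, α ≠ Finsupp.single i d)

/-- `Δ(p) := {α ∈ Ω(p) : p_α x^α is not a square}`. -/
def DelSet {n : ℕ} (d : ℕ) (p : MvPolynomial (Fin n) ℝ) : Finset (Fin n →₀ ℕ) :=
  pfilter (OmegaSet d p)
    (fun α => ¬ IsSquare ((monomial α (p.coeff α)) : MvPolynomial (Fin n) ℝ))

/-- Feasibility for program (lw) for `p`. -/
def LwFeas {n : ℕ} (d : ℕ) (p : MvPolynomial (Fin n) ℝ)
    (z : (Fin n →₀ ℕ) → Fin n → ℝ) : Prop :=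
  (∀ α ∈ DelSet d p, ∀ i, 0 ≤ z α i ∧ (z α i = 0 ↔ α i = 0)) ∧
  (∀ i, ∑ α ∈ DelSet d p, z α i ≤ p.coeff (Finsupp.single i d)) ∧
  (∀ α ∈ DelSet d p, adeg α = d →
    ∏ i, (z α i / (α i : ℝ)) ^ (α i) = (p.coeff α / (d : ℝ)) ^ d)

/-- The objective function `v` of program (lw). -/
def lwObj {n : ℕ} (d : ℕ) (p : MvPolynomial (Fin n) ℝ)
    (z : (Fin n →₀ ℕ) → Fin n → ℝ) : ℝ :=
  ∑ α ∈ pfilter (DelSet d p) (fun α => adeg α < d),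
    ((d : ℝ) - (adeg α : ℝ)) *
      (((p.coeff α / (d : ℝ)) ^ d * ∏ i, ((α i : ℝ) / z α i) ^ (α i)) ^
        ((1 : ℝ) / ((d : ℝ) - (adeg α : ℝ))))

/-- `ρ(p) ∈ [0,∞]`, the infimum of `v` over the feasible set (`⊤` if infeasible). -/
def lwRho {n : ℕ} (d : ℕ) (p : MvPolynomial (Fin n) ℝ) : EReal :=
  sInf ((fun z => ((lwObj d p z : ℝ) : EReal)) '' {z | LwFeas d p z})

/-- `p_gp := p(0) − ρ(p) ∈ ℝ ∪ {−∞}`. -/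
def lwGp {n : ℕ} (d : ℕ) (p : MvPolynomial (Fin n) ℝ) : EReal :=
  ((eval (0 : Fin n → ℝ) p : ℝ) : EReal) - lwRho d p

/-- `G(λ) := f − ∑ⱼ λⱼ gⱼ`. -/
def polyG {n m : ℕ} (f : MvPolynomial (Fin n) ℝ) (g : Fin m → MvPolynomial (Fin n) ℝ)
    (lam : Fin m → ℝ) : MvPolynomial (Fin n) ℝ :=
  f - ∑ j, C (lam j) * g j

/-- `s(f,g) := sup{G(λ)_gp : λ ∈ [0,∞)^m}`. -/
def sBound {n m : ℕ} (d : ℕ) (f : MvPolynomial (Fin n) ℝ)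
    (g : Fin m → MvPolynomial (Fin n) ℝ) : EReal :=
  sSup ((fun lam => lwGp d (polyG f g lam)) '' {lam : Fin m → ℝ | ∀ j, 0 ≤ lam j})


/-- `h_k := ∑_{j=0}^m a_{jk} g_j` for `gext = (g₀, g₁, …, g_m)` with `g₀ = −f`. -/
def hpoly {n m : ℕ} (gext : Fin (m+1) → MvPolynomial (Fin n) ℝ)
    (A : Fin (m+1) → Fin (m+1) → ℝ) (k : Fin (m+1)) : MvPolynomial (Fin n) ℝ :=
  ∑ j, C (A j k) * gext j

/-- `μ` extended by `μ₀ := 1`. -/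
def muExt {m : ℕ} (mu : Fin m → ℝ) : Fin (m+1) → ℝ := Fin.cons 1 mu

/-- `H(μ) := −∑_{k=0}^m μ_k h_k`. -/
def Hpoly {n m : ℕ} (gext : Fin (m+1) → MvPolynomial (Fin n) ℝ)
    (A : Fin (m+1) → Fin (m+1) → ℝ) (mu : Fin m → ℝ) : MvPolynomial (Fin n) ℝ :=
  - ∑ k, C (muExt mu k) * hpoly gext A k

/-- `H(μ)_α^+ := −∑_{j : (h_j)_α < 0} (h_j)_α μ_j`. -/
def Hplus {n m : ℕ} (gext : Fin (m+1) → MvPolynomial (Fin n) ℝ)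
    (A : Fin (m+1) → Fin (m+1) → ℝ) (mu : Fin m → ℝ) (α : Fin n →₀ ℕ) : ℝ :=
  ∑ j, if (hpoly gext A j).coeff α < 0 then -((hpoly gext A j).coeff α * muExt mu j) else 0

/-- `H(μ)_α^− := ∑_{j : (h_j)_α > 0} (h_j)_α μ_j`. -/
def Hminus {n m : ℕ} (gext : Fin (m+1) → MvPolynomial (Fin n) ℝ)
    (A : Fin (m+1) → Fin (m+1) → ℝ) (mu : Fin m → ℝ) (α : Fin n →₀ ℕ) : ℝ :=
  ∑ j, if 0 < (hpoly gext A j).coeff α then (hpoly gext A j).coeff α * muExt mu j else 0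

/-- `Δ := Δ(f) ∪ Δ(−g₁) ∪ ⋯ ∪ Δ(−g_m)` (note `−g₀ = f`). -/
def DelTot2 {n m : ℕ} (d : ℕ) (gext : Fin (m+1) → MvPolynomial (Fin n) ℝ) :
    Finset (Fin n →₀ ℕ) :=
  Finset.univ.biUnion (fun j : Fin (m+1) => DelSet d (-(gext j)))

/-- Feasibility for program (lw2). -/
def Lw2Feas {n m : ℕ} (d : ℕ) (gext : Fin (m+1) → MvPolynomial (Fin n) ℝ)
    (A : Fin (m+1) → Fin (m+1) → ℝ)
    (z : (Fin n →₀ ℕ) → Fin n → ℝ) (w : (Fin n →₀ ℕ) → ℝ) (mu : Fin m → ℝ) : Prop :=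
  (∀ j, 0 < mu j) ∧
  (∀ α ∈ DelTot2 d gext, ∀ i, 0 ≤ z α i ∧ (z α i = 0 ↔ α i = 0)) ∧
  (∀ α ∈ DelTot2 d gext, 0 < w α) ∧
  (∀ i, ∑ α ∈ DelTot2 d gext, z α i ≤ (Hpoly gext A mu).coeff (Finsupp.single i d)) ∧
  (∀ α ∈ DelTot2 d gext, adeg α = d →
    (w α / (d : ℝ)) ^ d ≤ ∏ i, (z α i / (α i : ℝ)) ^ (α i)) ∧
  (∀ α ∈ DelTot2 d gext, max (Hplus gext A mu α) (Hminus gext A mu α) ≤ w α) ∧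
  (∀ j : Fin (m+1), j ≠ 0 → 0 ≤ ∑ k, A j k * muExt mu k)

/-- The objective function `t` of program (lw2). -/
def lw2Obj {n m : ℕ} (d : ℕ) (gext : Fin (m+1) → MvPolynomial (Fin n) ℝ)
    (A : Fin (m+1) → Fin (m+1) → ℝ)
    (z : (Fin n →₀ ℕ) → Fin n → ℝ) (w : (Fin n →₀ ℕ) → ℝ) (mu : Fin m → ℝ) : ℝ :=
  (∑ j : Fin m, mu j * max (eval (0 : Fin n → ℝ) (hpoly gext A j.succ)) 0) +
  ∑ α ∈ pfilter (DelTot2 d gext) (fun α => adeg α < d),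
    ((d : ℝ) - (adeg α : ℝ)) *
      (((w α / (d : ℝ)) ^ d * ∏ i, ((α i : ℝ) / z α i) ^ (α i)) ^
        ((1 : ℝ) / ((d : ℝ) - (adeg α : ℝ))))

/-- `ρ_A ∈ [0,∞]`, the optimal value of program (lw2) (`⊤` if infeasible). -/
def rhoA {n m : ℕ} (d : ℕ) (gext : Fin (m+1) → MvPolynomial (Fin n) ℝ)
    (A : Fin (m+1) → Fin (m+1) → ℝ) : EReal :=
  sInf ((fun t : ((Fin n →₀ ℕ) → Fin n → ℝ) × ((Fin n →₀ ℕ) → ℝ) × (Fin m → ℝ) =>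
      ((lw2Obj d gext A t.1 t.2.1 t.2.2 : ℝ) : EReal)) ''
    {t | Lw2Feas d gext A t.1 t.2.1 t.2.2})

/-- `f^A_{gp,g} := −h₀(0) − ρ_A ∈ ℝ ∪ {−∞}`. -/
def fAgp {n m : ℕ} (d : ℕ) (gext : Fin (m+1) → MvPolynomial (Fin n) ℝ)
    (A : Fin (m+1) → Fin (m+1) → ℝ) : EReal :=
  ((-(eval (0 : Fin n → ℝ) (hpoly gext A 0)) : ℝ) : EReal) - rhoA d gext A

/-!
Since `Δ(-gⱼ) = ∅`, each `gⱼ` with `j ≥ 1` is a constant plus multiples of the `xᵢ^d`, so every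
`G(λ)` has the same monomial data `Δ(f)`, `f_α` as `f`. Moreover `H(μ) = G(λ)` with
`λ = (A μ̂)_{≥1}`, `μ̂ = (1, μ)`, and as `hₖ(0) ≥ 0` the value `-h₀(0) - t(z, w, μ)` of (lw2) is
`H(μ)(0)` minus the monomial part of `t`. So (lw2) is (lw) for `G(λ)` with the equality
constraints relaxed to `≥` and `|f_α|` replaced by `w_α ≥ |f_α|`. Neither relaxation gains
anything: shrinking the degree-`d` variables `z_α` restores equality, and the objective is monotone
in `w_α`; hence `f^A_{gp,g} ≤ s(f,g)`. Conversely `A` is an M-matrix, so `A μ̂ = (1, λ')` has a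
solution `μ ≥ λ'`, which is positive when `λ' > 0`; perturbing `λ` by `ε v`, with weights `v > 0`
chosen by (*) so that the coefficients of the `xᵢ^d` do not decrease, gives `s(f,g) ≤ f^A_{gp,g}`.
-/

open Filter Topology Matrix

lemma EReal.coe_sub_sInf_image_le {ι : Type*} {P : Set ι} {F : ι → ℝ} {c : ℝ} {T : EReal}
    (h : ∀ p ∈ P, ((c - F p : ℝ) : EReal) ≤ T) :
    (c : EReal) - sInf ((fun p => (F p : EReal)) '' P) ≤ T := by
  induction T using EReal.rec with
  | top => exact le_top
  | bot =>
    have hP : P = ∅ := Set.eq_empty_of_forall_notMem fun p hp =>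
      EReal.coe_ne_bot _ (le_bot_iff.1 (h p hp))
    simp [hP]
  | coe τ =>
    have hlow : ((c - τ : ℝ) : EReal) ≤ sInf ((fun p => (F p : EReal)) '' P) := by
      refine le_sInf ?_
      rintro _ ⟨p, hp, rfl⟩
      have := EReal.coe_le_coe_iff.1 (h p hp)
      exact EReal.coe_le_coe_iff.2 (by linarith)
    calc (c : EReal) - sInf ((fun p => (F p : EReal)) '' P)
        ≤ (c : EReal) - ((c - τ : ℝ) : EReal) := EReal.sub_le_sub le_rfl hlow
      _ = τ := by rw [← EReal.coe_sub, sub_sub_cancel]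

lemma EReal.coe_le_of_forall_pos_sub_mul_le {a K : ℝ} {X : EReal}
    (h : ∀ ε : ℝ, 0 < ε → ((a - ε * K : ℝ) : EReal) ≤ X) : (a : EReal) ≤ X := by
  have hlim : Tendsto (fun ε : ℝ => a - ε * K) (𝓝[>] 0) (𝓝 a) := by
    have : Continuous fun ε : ℝ => a - ε * K := by fun_prop
    simpa using (this.tendsto 0).mono_left nhdsWithin_le_nhds
  exact le_of_tendsto ((continuous_coe_real_ereal.tendsto a).comp hlim)
    (eventually_nhdsWithin_of_forall h)

theorem Matrix.exists_mulVec_eq_and_le {ι : Type*} [Fintype ι] [LinearOrder ι]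
    (A : Matrix ι ι ℝ) (hA : A.IsLowerTriangular) (hdiag : ∀ i, A i i = 1)
    (hlower : ∀ i j, j < i → A i j ≤ 0) (b : ι → ℝ) (hb : 0 ≤ b) :
    ∃ x, A *ᵥ x = b ∧ b ≤ x := by
  have hdet : A.det = 1 := by
    rw [Matrix.det_of_isLowerTriangular A hA]
    simp [hdiag]
  set x := A⁻¹ *ᵥ b
  have hx : A *ᵥ x = b := by
    rw [Matrix.mulVec_mulVec, Matrix.mul_nonsing_inv _ (by simp [hdet]), Matrix.one_mulVec]
  refine ⟨x, hx, fun i => ?_⟩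
  induction i using WellFoundedLT.induction with
  | _ i ih =>
    have hrow : b i = x i + ∑ j ∈ univ.erase i, A i j * x j := by
      rw [← hx, Matrix.mulVec, dotProduct, ← Finset.add_sum_erase _ _ (mem_univ i), hdiag,
        one_mul]
    have hrest : ∑ j ∈ univ.erase i, A i j * x j ≤ 0 := by
      refine Finset.sum_nonpos fun j hj => ?_
      rcases lt_or_gt_of_ne (ne_of_mem_erase hj) with hji | hij
      · exact mul_nonpos_of_nonpos_of_nonneg (hlower i j hji) ((hb j).trans (ih j hji))
      · rw [hA hij, zero_mul]
    linarith

theorem exists_pos_weights_sum_mul_nonpos {ι : Type*} [Finite ι] :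
    ∀ {m : ℕ} (c : ι → Fin m → ℝ),
      (∀ i, (∀ j, c i j = 0) ∨ ∃ J, c i J < 0 ∧ ∀ j, J < j → c i j = 0) →
      ∃ v : Fin m → ℝ, (∀ j, 0 < v j) ∧ ∀ i, ∑ j, v j * c i j ≤ 0
  | 0, _, _ => ⟨Fin.elim0, fun j => j.elim0, fun _ => by simp⟩
  | m + 1, c, hc => by
    have hlast : ∀ i, c i (Fin.last m) ≤ 0 := by
      intro i
      rcases hc i with h0 | ⟨J, hJ, hJ'⟩
      · exact (h0 _).le
      · rcases (Fin.le_last J).lt_or_eq with hlt | rfl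
        · exact (hJ' _ hlt).le
        · exact hJ.le
    -- rows whose last entry is negative are handled by a large last weight, the others by induction
    obtain ⟨v, hv, hvc⟩ := exists_pos_weights_sum_mul_nonpos
      (fun i j => if c i (Fin.last m) = 0 then c i j.castSucc else 0) <| by
        intro i
        split_ifs with hi
        · rcases hc i with h0 | ⟨J, hJ, hJ'⟩
          · exact Or.inl fun j => h0 _
          · right
            induction J using Fin.lastCases with
            | last => exact absurd hi hJ.ne
            | cast J => exact ⟨J, hJ, fun j hj => hJ' _ (Fin.castSucc_lt_castSucc_iff.2 hj)⟩
        · exact Or.inl fun _ => rfl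
    have hM : ∀ᶠ M in atTop, 0 < M ∧ ∀ i, ∑ j, v j * c i j.castSucc + M * c i (Fin.last m) ≤ 0 := by
      refine (eventually_gt_atTop 0).and (eventually_all.2 fun i => ?_)
      rcases (hlast i).lt_or_eq with hneg | hzero
      · exact (tendsto_atBot_add_const_left _ _
          (tendsto_id.atTop_mul_const_of_neg hneg)).eventually_le_atBot 0
      · refine Eventually.of_forall fun _ => ?_
        simpa [hzero] using hvc i
    obtain ⟨M, hM0, hMc⟩ := hM.exists
    refine ⟨Fin.snoc v M, fun j => ?_, fun i => ?_⟩
    · induction j using Fin.lastCases <;> simp [hv, hM0]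
    · simpa [Fin.sum_univ_castSucc] using hMc i

lemma prod_mul_div_pow {ι : Type*} [Fintype ι] (α : ι → ℕ) (z : ι → ℝ) (s : ℝ) :
    ∏ i, (s * z i / α i) ^ α i = s ^ (∑ i, α i) * ∏ i, (z i / α i) ^ α i := by
  rw [← Finset.prod_pow_eq_pow_sum, ← Finset.prod_mul_distrib]
  exact Finset.prod_congr rfl fun i _ => by rw [mul_div_assoc, mul_pow]

lemma exists_prod_mul_div_pow_eq {ι : Type*} [Fintype ι] (α : ι → ℕ) (z : ι → ℝ)
    (hα : ∑ i, α i ≠ 0) {q : ℝ} (hq : 0 < q) (hqle : q ≤ ∏ i, (z i / α i) ^ α i) :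
    ∃ s, 0 < s ∧ s ≤ 1 ∧ ∏ i, (s * z i / α i) ^ α i = q := by
  set P := ∏ i, (z i / α i) ^ α i
  have hP : 0 < P := hq.trans_le hqle
  have hqP : 0 < q / P := div_pos hq hP
  refine ⟨(q / P) ^ ((∑ i, α i : ℕ) : ℝ)⁻¹, Real.rpow_pos_of_pos hqP _,
    Real.rpow_le_one hqP.le ((div_le_one hP).2 hqle) (by positivity), ?_⟩
  rw [prod_mul_div_pow, ← Real.rpow_natCast, ← Real.rpow_mul hqP.le,
    inv_mul_cancel₀ (by exact_mod_cast hα), Real.rpow_one, div_mul_cancel₀ _ hP.ne']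

lemma mem_pfilter {β : Type*} {s : Finset β} {q : β → Prop} {a : β} :
    a ∈ pfilter s q ↔ a ∈ s ∧ q a :=
  @Finset.mem_filter β q (fun _ => Classical.propDecidable _) s a

section Polynomials

variable {n m d : ℕ}

lemma mem_DelSet_iff {p : MvPolynomial (Fin n) ℝ} {α : Fin n →₀ ℕ} :
    α ∈ DelSet d p ↔ p.coeff α ≠ 0 ∧ adeg α ≤ d ∧ α ≠ 0 ∧ (∀ i, α ≠ Finsupp.single i d) ∧
      ¬ IsSquare (monomial α (p.coeff α)) := by
  rw [DelSet, mem_pfilter, OmegaSet, mem_pfilter, mem_support_iff]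
  simp only [and_assoc]

lemma DelSet_congr {p q : MvPolynomial (Fin n) ℝ}
    (h : ∀ α, α ≠ 0 → (∀ i, α ≠ Finsupp.single i d) → p.coeff α = q.coeff α) :
    DelSet d p = DelSet d q := by
  ext α
  simp only [mem_DelSet_iff]
  constructor
  · rintro ⟨h1, h2, h3, h4, h5⟩
    exact ⟨h α h3 h4 ▸ h1, h2, h3, h4, h α h3 h4 ▸ h5⟩
  · rintro ⟨h1, h2, h3, h4, h5⟩
    exact ⟨h α h3 h4 ▸ h1, h2, h3, h4, h α h3 h4 ▸ h5⟩

def IsPurePowerSum (d : ℕ) (p : MvPolynomial (Fin n) ℝ) : Prop :=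
  ∀ α, α ≠ 0 → (∀ i, α ≠ Finsupp.single i d) → p.coeff α = 0

lemma isPurePowerSum_of_OmegaSet_eq_empty {p : MvPolynomial (Fin n) ℝ}
    (hp : p.totalDegree ≤ d) (h : OmegaSet d p = ∅) : IsPurePowerSum d p := by
  intro α h0 hε
  by_contra hα
  rcases le_or_gt (adeg α) d with hle | hlt
  · have : α ∈ OmegaSet d p := by
      rw [OmegaSet, mem_pfilter, mem_support_iff]
      exact ⟨hα, hle, h0, hε⟩
    simp [h] at this
  · exact hα (coeff_eq_zero_of_totalDegree_lt
      (hp.trans_lt (hlt.trans_eq (Finsupp.sum_fintype α (fun _ e => e) fun _ => rfl).symm)))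

variable {f : MvPolynomial (Fin n) ℝ} {g : Fin m → MvPolynomial (Fin n) ℝ}

lemma polyG_add_smul (lam v : Fin m → ℝ) (ε : ℝ) :
    polyG f g (lam + ε • v) = polyG f g lam - C ε * ∑ j, C (v j) * g j := by
  simp only [polyG, Pi.add_apply, Pi.smul_apply, smul_eq_mul, map_add, map_mul, add_mul,
    Finset.sum_add_distrib, Finset.mul_sum, mul_assoc]
  ring

lemma coeff_polyG_of_isPurePowerSum (hg : ∀ j, IsPurePowerSum d (g j)) (lam : Fin m → ℝ)
    {α : Fin n →₀ ℕ} (h0 : α ≠ 0) (hε : ∀ i, α ≠ Finsupp.single i d) :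
    (polyG f g lam).coeff α = f.coeff α := by
  simp [polyG, coeff_sum, hg _ α h0 hε]

lemma DelSet_polyG (hg : ∀ j, IsPurePowerSum d (g j)) (lam : Fin m → ℝ) :
    DelSet d (polyG f g lam) = DelSet d f :=
  DelSet_congr fun _ h0 hε => coeff_polyG_of_isPurePowerSum hg lam h0 hε

lemma coeff_polyG_of_mem_DelSet (hg : ∀ j, IsPurePowerSum d (g j)) (lam : Fin m → ℝ)
    {α : Fin n →₀ ℕ} (hα : α ∈ DelSet d f) : (polyG f g lam).coeff α = f.coeff α :=
  have hα := mem_DelSet_iff.1 hα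
  coeff_polyG_of_isPurePowerSum hg lam hα.2.2.1 hα.2.2.2.1

variable {gext : Fin (m+1) → MvPolynomial (Fin n) ℝ} {A : Fin (m+1) → Fin (m+1) → ℝ}

lemma DelTot2_eq_DelSet (hgext : gext = Fin.cons (-f) g)
    (hDelg : ∀ j : Fin (m+1), j ≠ 0 → DelSet d (-(gext j)) = ∅) :
    DelTot2 d gext = DelSet d f := by
  ext α
  simp only [DelTot2, mem_biUnion, mem_univ, true_and]
  constructor
  · rintro ⟨j, hα⟩
    rcases eq_or_ne j 0 with rfl | hj
    · simpa [hgext] using hα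
    · simp [hDelg j hj] at hα
  · exact fun hα => ⟨0, by simpa [hgext] using hα⟩

lemma coeff_hpoly_of_isPurePowerSum (hgext : gext = Fin.cons (-f) g)
    (hg : ∀ j, IsPurePowerSum d (g j)) (k : Fin (m+1)) {α : Fin n →₀ ℕ} (h0 : α ≠ 0)
    (hε : ∀ i, α ≠ Finsupp.single i d) :
    (hpoly gext A k).coeff α = -(A 0 k * f.coeff α) := by
  simp [hpoly, coeff_sum, Fin.sum_univ_succ, hgext, hg _ α h0 hε]

lemma max_Hplus_Hminus (hgext : gext = Fin.cons (-f) g) (hg : ∀ j, IsPurePowerSum d (g j))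
    (hA00 : A 0 0 = 1) (hA0 : ∀ k, k ≠ 0 → A 0 k = 0) (mu : Fin m → ℝ)
    {α : Fin n →₀ ℕ} (h0 : α ≠ 0) (hε : ∀ i, α ≠ Finsupp.single i d) :
    max (Hplus gext A mu α) (Hminus gext A mu α) = |f.coeff α| := by
  have hcoeff k := coeff_hpoly_of_isPurePowerSum (A := A) hgext hg k h0 hε
  have hP : Hplus gext A mu α = max (f.coeff α) 0 := by
    rw [Hplus, Fintype.sum_eq_single 0 fun k hk => by simp [hcoeff, hA0 k hk]]
    simp only [hcoeff, hA00, muExt, Fin.cons_zero, one_mul, mul_one, neg_neg, neg_lt_zero,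
      max_def_lt]
    split_ifs <;> linarith
  have hM : Hminus gext A mu α = max (-f.coeff α) 0 := by
    rw [Hminus, Fintype.sum_eq_single 0 fun k hk => by simp [hcoeff, hA0 k hk]]
    simp only [hcoeff, hA00, muExt, Fin.cons_zero, one_mul, mul_one, neg_pos, max_def_lt]
    split_ifs <;> linarith
  rw [hP, hM, max_max_max_comm, max_self, ← abs_eq_max_neg, max_eq_left (abs_nonneg _)]

end Polynomials

section Programs

variable {n m d : ℕ} {f : MvPolynomial (Fin n) ℝ} {g : Fin m → MvPolynomial (Fin n) ℝ}
  {gext : Fin (m+1) → MvPolynomial (Fin n) ℝ} {A : Fin (m+1) → Fin (m+1) → ℝ}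

lemma eval_zero_Hpoly (mu : Fin m → ℝ) :
    eval 0 (Hpoly gext A mu) =
      -eval 0 (hpoly gext A 0) - ∑ j, mu j * eval 0 (hpoly gext A j.succ) := by
  simp only [eval_zero, Hpoly, muExt, Fin.sum_univ_succ, Fin.cons_zero, C_1, one_mul,
    Fin.cons_succ, neg_add_rev, map_add, map_neg, map_sum, map_mul, constantCoeff_C]
  ring

lemma mulVec_apply_zero (hA00 : A 0 0 = 1) (hA0 : ∀ k, k ≠ 0 → A 0 k = 0)
    (x : Fin (m+1) → ℝ) : (A *ᵥ x) 0 = x 0 := by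
  simp only [Matrix.mulVec, dotProduct]
  rw [Fintype.sum_eq_single 0 fun k hk => by rw [hA0 k hk, zero_mul], hA00, one_mul]

lemma exists_mulVec_muExt_eq (hA : Matrix.IsLowerTriangular A) (hAdiag : ∀ j, A j j = 1)
    (hAlower : ∀ j k, k < j → A j k ≤ 0) (lam : Fin m → ℝ) (hlam : 0 ≤ lam) :
    ∃ mu, lam ≤ mu ∧ ∀ j, (A *ᵥ muExt mu) j.succ = lam j := by
  have hb : 0 ≤ (Fin.cons 1 lam : Fin (m+1) → ℝ) := fun j => by
    cases j using Fin.cases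
    · simp
    · simpa using hlam _
  obtain ⟨x, hx, hbx⟩ := Matrix.exists_mulVec_eq_and_le A hA hAdiag hAlower _ hb
  have hx0 : x 0 = 1 :=
    (mulVec_apply_zero (hAdiag 0) (fun k hk => hA (Fin.pos_iff_ne_zero.2 hk)) x).symm.trans
      (congrFun hx 0)
  have hmu : muExt (Fin.tail x) = x := by rw [muExt, ← hx0, Fin.cons_self_tail]
  exact ⟨Fin.tail x, fun j => hbx j.succ, fun j => by rw [hmu, hx]; rfl⟩

lemma Hpoly_eq_polyG (hgext : gext = Fin.cons (-f) g) (hA00 : A 0 0 = 1)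
    (hA0 : ∀ k, k ≠ 0 → A 0 k = 0) (mu : Fin m → ℝ) :
    Hpoly gext A mu = polyG f g (fun j => (A *ᵥ muExt mu) j.succ) := by
  have hswap : ∑ k, C (muExt mu k) * hpoly gext A k = ∑ j, C ((A *ᵥ muExt mu) j) * gext j := by
    simp only [hpoly, Matrix.mulVec, dotProduct, Finset.mul_sum, map_sum, Finset.sum_mul, map_mul]
    rw [Finset.sum_comm]
    exact Finset.sum_congr rfl fun _ _ => Finset.sum_congr rfl fun _ _ => by ring
  rw [Hpoly, hswap, Fin.sum_univ_succ, mulVec_apply_zero hA00 hA0, hgext]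
  simp [polyG, muExt, neg_add_eq_sub]

/-- The common summand of the objectives `v` of (lw) and `t` of (lw2). -/
def lwTerm (d : ℕ) (c : ℝ) (α : Fin n →₀ ℕ) (y : Fin n → ℝ) : ℝ :=
  ((d : ℝ) - (adeg α : ℝ)) *
    (((c / (d : ℝ)) ^ d * ∏ i, ((α i : ℝ) / y i) ^ (α i)) ^ ((1 : ℝ) / ((d : ℝ) - (adeg α : ℝ))))

lemma lwObj_eq_sum_lwTerm (p : MvPolynomial (Fin n) ℝ) (z : (Fin n →₀ ℕ) → Fin n → ℝ) :
    lwObj d p z = ∑ α ∈ pfilter (DelSet d p) (fun α => adeg α < d), lwTerm d (p.coeff α) α (z α) :=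
  rfl

lemma lwObj_polyG (hg : ∀ j, IsPurePowerSum d (g j)) (lam : Fin m → ℝ)
    (z : (Fin n →₀ ℕ) → Fin n → ℝ) :
    lwObj d (polyG f g lam) z =
      ∑ α ∈ pfilter (DelSet d f) (fun α => adeg α < d), lwTerm d (f.coeff α) α (z α) := by
  rw [lwObj_eq_sum_lwTerm, DelSet_polyG hg]
  refine Finset.sum_congr rfl fun α hα => ?_
  rw [coeff_polyG_of_mem_DelSet hg lam (mem_pfilter.1 hα).1]

lemma neg_eval_hpoly_sub_lw2Obj
    (hh0 : ∀ k : Fin (m+1), k ≠ 0 → 0 ≤ eval 0 (hpoly gext A k))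
    (z : (Fin n →₀ ℕ) → Fin n → ℝ) (w : (Fin n →₀ ℕ) → ℝ) (mu : Fin m → ℝ) :
    -eval 0 (hpoly gext A 0) - lw2Obj d gext A z w mu =
      eval 0 (Hpoly gext A mu) -
        ∑ α ∈ pfilter (DelTot2 d gext) (fun α => adeg α < d), lwTerm d (w α) α (z α) := by
  rw [eval_zero_Hpoly, lw2Obj]
  simp only [max_eq_left (hh0 _ (Fin.succ_ne_zero _))]
  rw [sub_sub]
  rfl

lemma div_pow_abs_of_even (hde : Even d) (c : ℝ) : (|c| / d) ^ d = (c / d) ^ d := by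
  rw [div_pow, div_pow, hde.pow_abs]

lemma lwTerm_abs (hde : Even d) (c : ℝ) (α : Fin n →₀ ℕ) (y : Fin n → ℝ) :
    lwTerm d |c| α y = lwTerm d c α y := by
  rw [lwTerm, lwTerm, div_pow_abs_of_even hde]

lemma lwTerm_le_lwTerm (hde : Even d) {c w : ℝ} (hcw : |c| ≤ w) {α : Fin n →₀ ℕ}
    (hα : adeg α ≤ d) {y : Fin n → ℝ} (hy : ∀ i, 0 ≤ y i) :
    lwTerm d c α y ≤ lwTerm d w α y := by
  have hα' : (adeg α : ℝ) ≤ d := by exact_mod_cast hα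
  have hprod : 0 ≤ ∏ i, ((α i : ℝ) / y i) ^ (α i) :=
    Finset.prod_nonneg fun i _ => pow_nonneg (div_nonneg (Nat.cast_nonneg _) (hy i)) _
  rw [← lwTerm_abs hde, lwTerm, lwTerm]
  gcongr

/-- Shrinking `z_α` for `|α| = d` turns `≥` into equality and only loosens the budgets. -/
lemma exists_lwFeas_of_prod_ge (hde : Even d) (hd : d ≠ 0) (p : MvPolynomial (Fin n) ℝ)
    (z : (Fin n →₀ ℕ) → Fin n → ℝ)
    (hz : ∀ α ∈ DelSet d p, ∀ i, 0 ≤ z α i ∧ (z α i = 0 ↔ α i = 0))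
    (hbud : ∀ i, ∑ α ∈ DelSet d p, z α i ≤ p.coeff (Finsupp.single i d))
    (hprod : ∀ α ∈ DelSet d p, adeg α = d →
      (p.coeff α / d) ^ d ≤ ∏ i, (z α i / (α i : ℝ)) ^ (α i)) :
    ∃ z', LwFeas d p z' ∧ ∀ α, adeg α < d → z' α = z α := by
  have hscale : ∀ α, α ∈ DelSet d p ∧ adeg α = d → ∃ s : ℝ, 0 < s ∧ s ≤ 1 ∧
      ∏ i, (s * z α i / (α i : ℝ)) ^ (α i) = (p.coeff α / d) ^ d := fun α ⟨hα, hαd⟩ =>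
    exists_prod_mul_div_pow_eq (fun i => α i) (z α) (show adeg α ≠ 0 from hαd ▸ hd)
      (hde.pow_pos (div_ne_zero (mem_DelSet_iff.1 hα).1 (Nat.cast_ne_zero.2 hd)))
      (hprod α hα hαd)
  choose! s hs0 hs1 hs using hscale
  refine ⟨fun α i => if adeg α = d then s α * z α i else z α i, ⟨fun α hα i => ?_, fun i => ?_,
    fun α hα hαd => by simpa only [hαd, if_true] using hs α ⟨hα, hαd⟩⟩,
    fun α hαd => funext fun i => if_neg hαd.ne⟩
  · dsimp only
    split_ifs with hαd
    · obtain ⟨hz0, hziff⟩ := hz α hα i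
      have hs0 := hs0 α ⟨hα, hαd⟩
      exact ⟨mul_nonneg hs0.le hz0, by rw [mul_eq_zero, or_iff_right hs0.ne', hziff]⟩
    · exact hz α hα i
  · refine (Finset.sum_le_sum fun α hα => ?_).trans (hbud i)
    dsimp only
    split_ifs with hαd
    · exact mul_le_of_le_one_left (hz α hα i).1 (hs1 α ⟨hα, hαd⟩)
    · exact le_rfl

lemma fAgp_le_sBound (hde : Even d) (hd : d ≠ 0) (hgext : gext = Fin.cons (-f) g)
    (hg : ∀ j, IsPurePowerSum d (g j))
    (hDelg : ∀ j : Fin (m+1), j ≠ 0 → DelSet d (-(gext j)) = ∅)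
    (hA00 : A 0 0 = 1) (hA0 : ∀ k, k ≠ 0 → A 0 k = 0)
    (hh0 : ∀ k : Fin (m+1), k ≠ 0 → 0 ≤ eval 0 (hpoly gext A k)) :
    fAgp d gext A ≤ sBound d f g := by
  refine EReal.coe_sub_sInf_image_le fun ⟨z, w, mu⟩ hfeas => ?_
  obtain ⟨-, hz, -, hbud, hprod, hw, hAmu⟩ := hfeas
  set lam : Fin m → ℝ := fun j => (A *ᵥ muExt mu) j.succ
  have hDT := DelTot2_eq_DelSet hgext hDelg
  have hH := Hpoly_eq_polyG hgext hA00 hA0 mu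
  have hwf : ∀ α ∈ DelSet d f, |f.coeff α| ≤ w α := fun α hα => by
    have hα' := mem_DelSet_iff.1 hα
    rw [← max_Hplus_Hminus hgext hg hA00 hA0 mu hα'.2.2.1 hα'.2.2.2.1]
    exact hw α (hDT ▸ hα)
  obtain ⟨z', hz', hz'z⟩ := exists_lwFeas_of_prod_ge hde hd (polyG f g lam) z
    (fun α hα => hz α (by rwa [hDT, ← DelSet_polyG hg lam]))
    (fun i => by rw [DelSet_polyG hg, ← hH, ← hDT]; exact hbud i)
    (fun α hα hαd => by
      rw [DelSet_polyG hg] at hα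
      rw [coeff_polyG_of_mem_DelSet hg lam hα, ← div_pow_abs_of_even hde]
      refine le_trans ?_ (hprod α (hDT ▸ hα) hαd)
      gcongr
      exact hwf α hα)
  have hobj : lwObj d (polyG f g lam) z' ≤
      ∑ α ∈ pfilter (DelTot2 d gext) (fun α => adeg α < d), lwTerm d (w α) α (z α) := by
    rw [lwObj_polyG hg, hDT]
    refine Finset.sum_le_sum fun α hα => ?_
    obtain ⟨hαf, hαd⟩ := mem_pfilter.1 hα
    rw [hz'z α hαd]
    exact lwTerm_le_lwTerm hde (hwf α hαf) hαd.le fun i => (hz α (hDT ▸ hαf) i).1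
  calc ((-eval 0 (hpoly gext A 0) - lw2Obj d gext A z w mu : ℝ) : EReal)
      ≤ ((eval 0 (polyG f g lam) - lwObj d (polyG f g lam) z' : ℝ) : EReal) := by
        rw [neg_eval_hpoly_sub_lw2Obj hh0, hH]
        exact EReal.coe_le_coe_iff.2 (by linarith)
    _ ≤ lwGp d (polyG f g lam) := by
      rw [EReal.coe_sub]
      exact EReal.sub_le_sub le_rfl (sInf_le ⟨z', hz', rfl⟩)
    _ ≤ sBound d f g := le_sSup ⟨lam, fun j => hAmu j.succ (Fin.succ_ne_zero j), rfl⟩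

lemma lw2Feas_of_lwFeas (hde : Even d) (hgext : gext = Fin.cons (-f) g)
    (hg : ∀ j, IsPurePowerSum d (g j))
    (hDelg : ∀ j : Fin (m+1), j ≠ 0 → DelSet d (-(gext j)) = ∅)
    (hA00 : A 0 0 = 1) (hA0 : ∀ k, k ≠ 0 → A 0 k = 0) {lam lam' mu : Fin m → ℝ}
    {z : (Fin n →₀ ℕ) → Fin n → ℝ} (hz : LwFeas d (polyG f g lam) z) (hmu : ∀ j, 0 < mu j)
    (hsolve : ∀ j, (A *ᵥ muExt mu) j.succ = lam' j) (hlam' : 0 ≤ lam')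
    (hbud : ∀ i, (polyG f g lam).coeff (Finsupp.single i d) ≤
      (polyG f g lam').coeff (Finsupp.single i d)) :
    Lw2Feas d gext A z (fun α => |f.coeff α|) mu := by
  obtain ⟨hzz, hzbud, hzprod⟩ := hz
  have hDT := DelTot2_eq_DelSet hgext hDelg
  have hDG := DelSet_polyG (f := f) hg lam
  have hH : Hpoly gext A mu = polyG f g lam' :=
    (Hpoly_eq_polyG hgext hA00 hA0 mu).trans (congrArg _ (funext hsolve))
  refine ⟨hmu, fun α hα => hzz α (by rwa [hDG, ← hDT]),
    fun α hα => abs_pos.2 (mem_DelSet_iff.1 (hDT ▸ hα)).1, fun i => ?_, fun α hα hαd => ?_,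
    fun α hα => ?_, fun j hj => ?_⟩
  · rw [hDT, hH, ← hDG]
    exact (hzbud i).trans (hbud i)
  · rw [hDT] at hα
    rw [div_pow_abs_of_even hde, ← coeff_polyG_of_mem_DelSet hg lam hα]
    exact (hzprod α (hDG ▸ hα) hαd).ge
  · have hα' := mem_DelSet_iff.1 (hDT ▸ hα)
    rw [max_Hplus_Hminus hgext hg hA00 hA0 mu hα'.2.2.1 hα'.2.2.2.1]
  · obtain ⟨j, rfl⟩ := Fin.exists_succ_eq.2 hj
    show 0 ≤ (A *ᵥ muExt mu) j.succ
    rw [hsolve]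
    exact hlam' j

/-- (lw2) demands `μ > 0`, so `λ ≥ 0` is perturbed to `λ + ε v > 0`; by the choice of `v` this
does not decrease the coefficients of `xᵢ^d`, and then `ε → 0`. -/
lemma sBound_le_fAgp (hde : Even d) (hgext : gext = Fin.cons (-f) g)
    (hg : ∀ j, IsPurePowerSum d (g j))
    (hDelg : ∀ j : Fin (m+1), j ≠ 0 → DelSet d (-(gext j)) = ∅)
    (hA : Matrix.IsLowerTriangular A) (hAdiag : ∀ j, A j j = 1)
    (hAlower : ∀ j k, k < j → A j k ≤ 0)
    (hh0 : ∀ k : Fin (m+1), k ≠ 0 → 0 ≤ eval 0 (hpoly gext A k))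
    {v : Fin m → ℝ} (hv : ∀ j, 0 < v j)
    (hvg : ∀ i, ∑ j, v j * (g j).coeff (Finsupp.single i d) ≤ 0) :
    sBound d f g ≤ fAgp d gext A := by
  have hA0 : ∀ k, k ≠ 0 → A 0 k = 0 := fun k hk => hA (Fin.pos_iff_ne_zero.2 hk)
  refine sSup_le ?_
  rintro _ ⟨lam, hlam, rfl⟩
  refine EReal.coe_sub_sInf_image_le fun z hz => ?_
  refine EReal.coe_le_of_forall_pos_sub_mul_le (K := ∑ j, v j * eval 0 (g j)) fun ε hε => ?_
  have hlam' : ∀ j, 0 < (lam + ε • v) j := fun j =>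
    add_pos_of_nonneg_of_pos (hlam j) (mul_pos hε (hv j))
  obtain ⟨mu, hmu, hsolve⟩ := exists_mulVec_muExt_eq hA hAdiag hAlower _ fun j => (hlam' j).le
  have hfeas := lw2Feas_of_lwFeas hde hgext hg hDelg (hAdiag 0) hA0 hz
    (fun j => (hlam' j).trans_le (hmu j)) hsolve (fun j => (hlam' j).le) fun i => by
      have := mul_nonpos_of_nonneg_of_nonpos hε.le (hvg i)
      simp only [polyG_add_smul, coeff_sub, coeff_C_mul, coeff_sum]
      linarith
  have hH : Hpoly gext A mu = polyG f g (lam + ε • v) :=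
    (Hpoly_eq_polyG hgext (hAdiag 0) hA0 mu).trans (congrArg _ (funext hsolve))
  calc ((eval 0 (polyG f g lam) - lwObj d (polyG f g lam) z - ε * ∑ j, v j * eval 0 (g j) : ℝ)
        : EReal)
      = ((-eval 0 (hpoly gext A 0) - lw2Obj d gext A z (fun α => |f.coeff α|) mu : ℝ)
          : EReal) := by
        rw [neg_eval_hpoly_sub_lw2Obj hh0, hH, polyG_add_smul, lwObj_polyG hg,
          DelTot2_eq_DelSet hgext hDelg]
        simp only [lwTerm_abs hde, map_sub, map_mul, map_sum, eval_C, Finset.mul_sum]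
        rw [sub_right_comm]
    _ ≤ fAgp d gext A := by
      rw [EReal.coe_sub]
      exact EReal.sub_le_sub le_rfl (sInf_le ⟨(z, _, mu), hfeas, rfl⟩)

end Programs

theorem stmt7_general {n m : ℕ} (d : ℕ)
    (f : MvPolynomial (Fin n) ℝ) (g : Fin m → MvPolynomial (Fin n) ℝ)
    (hd2 : 2 ≤ d) (hde : Even d)
    (hdg : ∀ j, (g j).totalDegree ≤ d)
    (gext : Fin (m+1) → MvPolynomial (Fin n) ℝ) (hgext : gext = Fin.cons (-f) g)
    (hO : ∀ j, OmegaSet d (-(gext j)) = DelSet d (-(gext j)))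
    (hstar : ∀ i : Fin n, ∃ j : Fin (m+1),
      (gext j).coeff (Finsupp.single i d) < 0 ∧
      ∀ j', j < j' → (gext j').coeff (Finsupp.single i d) = 0)
    (A : Fin (m+1) → Fin (m+1) → ℝ)
    (hAdiag : ∀ j, A j j = 1) (hAupper : ∀ j k, j < k → A j k = 0)
    (hAlower : ∀ j k, k < j → A j k ≤ 0)
    (hDelg : ∀ j : Fin (m+1), j ≠ 0 → DelSet d (-(gext j)) = ∅)
    (hh0 : ∀ k : Fin (m+1), k ≠ 0 → 0 ≤ eval (0 : Fin n → ℝ) (hpoly gext A k)) :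
    fAgp d gext A = sBound d f g := by
  have hA : Matrix.IsLowerTriangular A := fun j k h => hAupper j k h
  have hg : ∀ j, IsPurePowerSum d (g j) := fun j α h0 hε => by
    have hΩ : OmegaSet d (-g j) = ∅ := by
      simpa [hgext] using (hO j.succ).trans (hDelg _ j.succ_ne_zero)
    simpa using isPurePowerSum_of_OmegaSet_eq_empty (by simpa using hdg j) hΩ α h0 hε
  obtain ⟨v, hv, hvg⟩ := exists_pos_weights_sum_mul_nonpos
    (fun i j => (g j).coeff (Finsupp.single i d)) fun i => by
      obtain ⟨J, hJ, hJ'⟩ := hstar i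
      subst hgext
      cases J using Fin.cases with
      | zero => exact Or.inl fun j => by simpa using hJ' j.succ j.succ_pos
      | succ J =>
        exact Or.inr ⟨J, by simpa using hJ, fun j hj => by
          simpa using hJ' j.succ (Fin.succ_lt_succ_iff.2 hj)⟩
  exact le_antisymm
    (fAgp_le_sBound hde (by omega) hgext hg hDelg (hAdiag 0)
      (fun k hk => hA (Fin.pos_iff_ne_zero.2 hk)) hh0)
    (sBound_le_fAgp hde hgext hg hDelg hA hAdiag hAlower hh0 hv hvg)

/-- Theorem (important special case, part 2): under (*), with `A` lower triangular as in part 1,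
if moreover `Δ(−g_j) = ∅` for `j = 1,…,m` and `h_k(0) ≥ 0` for `k = 1,…,m`, then
`f^A_{gp,g} = s(f,g)`. -/
theorem stmt7 {n m : ℕ} (hn : 1 ≤ n) (d : ℕ)
    (f : MvPolynomial (Fin n) ℝ) (g : Fin m → MvPolynomial (Fin n) ℝ)
    (hd2 : 2 ≤ d) (hde : Even d) (hdf : f.totalDegree ≤ d)
    (hdg : ∀ j, (g j).totalDegree ≤ d)
    (hdLeast : ∀ d' : ℕ, Even d' → 2 ≤ d' → f.totalDegree ≤ d' →
      (∀ j, (g j).totalDegree ≤ d') → d ≤ d')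
    (gext : Fin (m+1) → MvPolynomial (Fin n) ℝ) (hgext : gext = Fin.cons (-f) g)
    (hO : ∀ j, OmegaSet d (-(gext j)) = DelSet d (-(gext j)))
    (hstar : ∀ i : Fin n, ∃ j : Fin (m+1),
      (gext j).coeff (Finsupp.single i d) < 0 ∧
      ∀ j', j < j' → (gext j').coeff (Finsupp.single i d) = 0)
    (A : Fin (m+1) → Fin (m+1) → ℝ)
    (hAdiag : ∀ j, A j j = 1) (hAupper : ∀ j k, j < k → A j k = 0)
    (hAlower : ∀ j k, k < j → A j k ≤ 0)
    (hneg : ∀ i : Fin n, ∃! k : Fin (m+1),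
      (hpoly gext A k).coeff (Finsupp.single i d) < 0)
    (hDelg : ∀ j : Fin (m+1), j ≠ 0 → DelSet d (-(gext j)) = ∅)
    (hh0 : ∀ k : Fin (m+1), k ≠ 0 → 0 ≤ eval (0 : Fin n → ℝ) (hpoly gext A k)) :
    fAgp d gext A = sBound d f g :=
  stmt7_general d f g hd2 hde hdg gext hgext hO hstar A hAdiag hAupper hAlower hDelg hh0
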